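/- In the general noisy-response setting, for any σ > 0, any θ, θ' ∈ ℝ^d, and any measurable set A ⊆ E × {0,1}, |D_σ(θ)(A) − D_σ(θ')(A)| ≤ ‖θ − θ'‖₂ / (2σ). In other words, the noisy-response distribution map is (1/(2σ))-Lipschitz in total variation distance. -/

import Mathlib

/-!
For a fixed base sample the response depends measurably on `θ + ξ` alone, so `D_σ(θ)` is a
mixture, over the base distribution, of pushforwards of `N(θ, σ²I)`, and it suffices to bound the
total variation distance between `N(θ, σ²I)` and `N(θ', σ²I)`. After rescaling, this is the
distance between the standard Gaussian and its translate by `u = (θ - θ') / σ`. The standard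
Gaussian is invariant under the reflection exchanging `u` and `‖u‖ e₀`, so the translate may be
taken along the first coordinate, and the product structure reduces the problem to one dimension.
There the densities of `N(c, 1)` and `N(0, 1)` cross at `c / 2`, so the difference of the masses
of any set is at most the `N(0, 1)`-mass of an interval of length `c`, which is at most
`c / √(2π) ≤ c / 2`.
-/

open MeasureTheory ProbabilityTheory

/-- The general noisy-response distribution map: the pushforward of the base distribution
tensored with Gaussian perception noise N(0, σ²I_d) under ((x,y),ξ) ↦ (ρ(x, θ+ξ), y). -/
noncomputable def noisyMapGen {E : Type*} [MeasurableSpace E] {d : ℕ}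
    (DB : Measure (E × Bool)) (ρ : E → (Fin d → ℝ) → E) (σ : ℝ) (θ : Fin d → ℝ) :
    Measure (E × Bool) :=
  Measure.map (fun q : (E × Bool) × (Fin d → ℝ) => (ρ q.1.1 (θ + q.2), q.1.2))
    (DB.prod (Measure.pi fun _ : Fin d => gaussianReal 0 ⟨σ ^ 2, sq_nonneg σ⟩))

open Set
open scoped NNReal Real

namespace MeasureTheory.Measure

variable {α β : Type*} [MeasurableSpace α] [MeasurableSpace β]

lemma measureReal_sub_le_of_restrict_le {μ ν : Measure α} [IsFiniteMeasure μ] [IsFiniteMeasure ν]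
    {P s : Set α} (hP : MeasurableSet P) (hs : MeasurableSet s)
    (hle : ν.restrict P ≤ μ.restrict P) (hge : μ.restrict Pᶜ ≤ ν.restrict Pᶜ) :
    μ.real s - ν.real s ≤ μ.real P - ν.real P := by
  have le_real {μ' ν' : Measure α} [IsFiniteMeasure ν'] (h : μ' ≤ ν') (t : Set α) :
      μ'.real t ≤ ν'.real t :=
    ENNReal.toReal_mono (measure_ne_top _ _) (Measure.le_iff'.1 h t)
  have outside : μ.real (s \ P) ≤ ν.real (s \ P) := by
    have := le_real hge s
    rwa [measureReal_restrict_apply hs, measureReal_restrict_apply hs] at this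
  have inside : ν.real (P \ s) ≤ μ.real (P \ s) := by
    have := le_real hle sᶜ
    rwa [measureReal_restrict_apply hs.compl, measureReal_restrict_apply hs.compl,
      inter_comm] at this
  have hμs := measureReal_inter_add_sdiff (μ := μ) (s := s) hP
  have hνs := measureReal_inter_add_sdiff (μ := ν) (s := s) hP
  have hμP := measureReal_inter_add_sdiff (μ := μ) (s := P) hs
  have hνP := measureReal_inter_add_sdiff (μ := ν) (s := P) hs
  rw [inter_comm] at hμP hνP
  linarith

def TVDistLE (μ ν : Measure α) (C : ℝ) : Prop :=
  ∀ s, MeasurableSet s → |μ.real s - ν.real s| ≤ C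

namespace TVDistLE

variable {μ ν : Measure α} {C : ℝ}

lemma refl (μ : Measure α) (hC : 0 ≤ C) : TVDistLE μ μ C :=
  fun s _ => by simpa using hC

lemma mono (h : TVDistLE μ ν C) {C' : ℝ} (hC : C ≤ C') : TVDistLE μ ν C' :=
  fun s hs => (h s hs).trans hC

lemma map (h : TVDistLE μ ν C) {f : α → β} (hf : Measurable f) :
    TVDistLE (μ.map f) (ν.map f) C := fun s hs => by
  rw [map_measureReal_apply hf hs, map_measureReal_apply hf hs]
  exact h _ (hf hs)

lemma of_sub_le [IsProbabilityMeasure μ] [IsProbabilityMeasure ν]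
    (h : ∀ s, MeasurableSet s → μ.real s - ν.real s ≤ C) : TVDistLE μ ν C := fun s hs => by
  refine abs_sub_le_iff.2 ⟨h s hs, ?_⟩
  have := h sᶜ hs.compl
  rw [measureReal_compl hs, measureReal_compl hs] at this
  simp only [probReal_univ] at this
  linarith

lemma const_prod (μ : Measure α) [IsProbabilityMeasure μ] {ν ν' : Measure β} [IsFiniteMeasure ν]
    [IsFiniteMeasure ν'] (h : TVDistLE ν ν' C) : TVDistLE (μ.prod ν) (μ.prod ν') C := by
  intro s hs
  have slice_integral : ∀ (η : Measure β) [IsFiniteMeasure η],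
      (μ.prod η).real s = ∫ x, η.real (Prod.mk x ⁻¹' s) ∂μ ∧
        Integrable (fun x => η.real (Prod.mk x ⁻¹' s)) μ := fun η _ => by
    have hmeas := measurable_measure_prodMk_left (ν := η) hs
    refine ⟨?_, .of_bound hmeas.ennreal_toReal.aestronglyMeasurable (η.real univ)
      (ae_of_all _ fun x => ?_)⟩
    · rw [measureReal_def, Measure.prod_apply hs, ← integral_toReal hmeas.aemeasurable
        (ae_of_all _ fun x => measure_lt_top _ _)]
      rfl
    · rw [Real.norm_of_nonneg measureReal_nonneg]
      exact measureReal_mono (subset_univ _)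
  obtain ⟨hν, hν_int⟩ := slice_integral ν
  obtain ⟨hν', hν'_int⟩ := slice_integral ν'
  rw [hν, hν', ← integral_sub hν_int hν'_int, ← Real.norm_eq_abs]
  simpa using norm_integral_le_of_norm_le_const (μ := μ)
    (f := fun x => ν.real (Prod.mk x ⁻¹' s) - ν'.real (Prod.mk x ⁻¹' s))
    (ae_of_all _ fun x => h _ (measurable_prodMk_left hs))

lemma prod_const [IsFiniteMeasure μ] [IsFiniteMeasure ν] (h : TVDistLE μ ν C) (η : Measure β)
    [IsProbabilityMeasure η] :
    TVDistLE (μ.prod η) (ν.prod η) C := by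
  rw [← prod_swap (μ := η), ← prod_swap (μ := η)]
  exact (h.const_prod η).map measurable_swap

lemma pi_of_eq_succAbove {n : ℕ} {μ ν : Fin (n + 1) → Measure α} [∀ i, IsProbabilityMeasure (μ i)]
    [∀ i, IsProbabilityMeasure (ν i)] {i : Fin (n + 1)} (h : TVDistLE (μ i) (ν i) C)
    (heq : ∀ j, μ (i.succAbove j) = ν (i.succAbove j)) :
    TVDistLE (Measure.pi μ) (Measure.pi ν) C := by
  rw [← (measurePreserving_piFinSuccAbove μ i).symm.map_eq,
    ← (measurePreserving_piFinSuccAbove ν i).symm.map_eq, funext heq]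
  exact (h.prod_const _).map (MeasurableEquiv.measurable _)

end TVDistLE

end MeasureTheory.Measure

namespace ProbabilityTheory

lemma gaussianPDFReal_le_inv_sqrt (μ : ℝ) (v : ℝ≥0) (x : ℝ) :
    gaussianPDFReal μ v x ≤ (√(2 * π * v))⁻¹ := by
  rw [gaussianPDFReal_def]
  refine mul_le_of_le_one_right (by positivity) (Real.exp_le_one_iff.2 ?_)
  exact div_nonpos_of_nonpos_of_nonneg (neg_nonpos.2 (sq_nonneg _)) (by positivity)

lemma gaussianPDFReal_le_of_sq_le {μ μ' : ℝ} {v : ℝ≥0} {x : ℝ} (h : (x - μ') ^ 2 ≤ (x - μ) ^ 2) :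
    gaussianPDFReal μ v x ≤ gaussianPDFReal μ' v x := by
  simp only [gaussianPDFReal_def]
  gcongr

lemma gaussianReal_restrict_le {μ μ' : ℝ} {v : ℝ≥0} (hv : v ≠ 0) {s : Set ℝ} (hs : MeasurableSet s)
    (h : ∀ x ∈ s, (x - μ') ^ 2 ≤ (x - μ) ^ 2) :
    (gaussianReal μ v).restrict s ≤ (gaussianReal μ' v).restrict s := by
  rw [gaussianReal_of_var_ne_zero _ hv, gaussianReal_of_var_ne_zero _ hv,
    restrict_withDensity hs, restrict_withDensity hs]
  refine withDensity_mono ((ae_restrict_iff' hs).2 (ae_of_all _ fun x hx => ?_))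
  exact ENNReal.ofReal_le_ofReal (gaussianPDFReal_le_of_sq_le (h x hx))

lemma gaussianReal_real_Ico_le (μ : ℝ) {v : ℝ≥0} (hv : v ≠ 0) {a b : ℝ} (hab : a ≤ b) :
    (gaussianReal μ v).real (Ico a b) ≤ (b - a) / √(2 * π * v) := by
  have hle : gaussianReal μ v (Ico a b) ≤ ENNReal.ofReal ((√(2 * π * v))⁻¹) * volume (Ico a b) := by
    rw [gaussianReal_of_var_ne_zero _ hv, withDensity_apply _ measurableSet_Ico,
      ← setLIntegral_const]
    exact setLIntegral_mono measurable_const fun x _ =>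
      ENNReal.ofReal_le_ofReal (gaussianPDFReal_le_inv_sqrt μ v x)
  rw [Real.volume_Ico, ← ENNReal.ofReal_mul (by positivity), inv_mul_eq_div] at hle
  exact ENNReal.toReal_le_of_le_ofReal (by positivity) hle

lemma tvDistLE_gaussianReal {v : ℝ≥0} (hv : v ≠ 0) {c : ℝ} (hc : 0 ≤ c) :
    (gaussianReal c v).TVDistLE (gaussianReal 0 v) (c / √(2 * π * v)) := by
  refine Measure.TVDistLE.of_sub_le fun s hs => ?_
  have shift : (gaussianReal c v).real (Ici (c / 2)) = (gaussianReal 0 v).real (Ici (-(c / 2))) := by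
    have := gaussianReal_map_const_add (μ := 0) (v := v) c
    rw [zero_add] at this
    rw [← this, map_measureReal_apply (measurable_const_add c) measurableSet_Ici]
    congr 1
    ext x
    simp only [mem_preimage, mem_Ici]
    constructor <;> intro h <;> linarith
  calc (gaussianReal c v).real s - (gaussianReal 0 v).real s
      ≤ (gaussianReal c v).real (Ici (c / 2)) - (gaussianReal 0 v).real (Ici (c / 2)) :=
        Measure.measureReal_sub_le_of_restrict_le measurableSet_Ici hs
          (gaussianReal_restrict_le hv measurableSet_Ici fun x (hx : c / 2 ≤ x) => by nlinarith)
          (gaussianReal_restrict_le hv measurableSet_Ici.compl fun x hx => by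
            simp only [mem_compl_iff, mem_Ici, not_le] at hx
            nlinarith)
    _ = (gaussianReal 0 v).real (Ico (-(c / 2)) (c / 2)) := by
        rw [shift, ← Ici_sdiff_Ici, measureReal_sdiff (Ici_subset_Ici.2 (by linarith))
          measurableSet_Ici]
    _ ≤ c / √(2 * π * v) := by
        simpa using gaussianReal_real_Ico_le 0 hv (a := -(c / 2)) (b := c / 2) (by linarith)

lemma tvDistLE_stdGaussian_map_single {n : ℕ} (i : Fin (n + 1)) {c : ℝ} (hc : 0 ≤ c) :
    ((stdGaussian (EuclideanSpace ℝ (Fin (n + 1)))).map (EuclideanSpace.single i c + ·)).TVDistLE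
      (stdGaussian _) (c / 2) := by
  have hshift : (EuclideanSpace.single i c + ·) ∘ WithLp.toLp 2 =
      WithLp.toLp 2 ∘ fun y j => Pi.single i c j + y j := by
    ext y j
    simp [Pi.single_apply]
  rw [← map_pi_eq_stdGaussian, Measure.map_map (measurable_const_add _) (by fun_prop), hshift,
    ← Measure.map_map (by fun_prop) (by fun_prop),
    Measure.pi_map_pi fun _ => (measurable_const_add _).aemeasurable]
  simp_rw [gaussianReal_map_const_add, zero_add]
  refine (Measure.TVDistLE.pi_of_eq_succAbove (i := i) ?_ fun j => ?_).map (by fun_prop)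
  · rw [Pi.single_eq_same]
    refine (tvDistLE_gaussianReal one_ne_zero hc).mono ?_
    have two_le : 2 ≤ √(2 * π) := by
      rw [Real.le_sqrt zero_le_two (by positivity)]
      nlinarith [Real.pi_gt_three]
    rw [NNReal.coe_one, mul_one]
    exact div_le_div_of_nonneg_left hc two_pos two_le
  · rw [Pi.single_eq_of_ne (i.succAbove_ne j)]

lemma tvDistLE_stdGaussian_map_add_of_norm_eq {E : Type*} [NormedAddCommGroup E]
    [InnerProductSpace ℝ E] [FiniteDimensional ℝ E] [MeasurableSpace E] [BorelSpace E]
    {u w : E} (hnorm : ‖w‖ = ‖u‖) {C : ℝ}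
    (h : ((stdGaussian E).map (w + ·)).TVDistLE (stdGaussian E) C) :
    ((stdGaussian E).map (u + ·)).TVDistLE (stdGaussian E) C := by
  set R := (ℝ ∙ (w - u))ᗮ.reflection
  have hR : (stdGaussian E).map R = stdGaussian E := stdGaussian_map R
  have hcomm : R ∘ (w + ·) = (u + ·) ∘ R := by
    ext x
    simp [R, Submodule.reflection_sub hnorm]
  have hRm : Measurable R := R.continuous.measurable
  rw [← hR, Measure.map_map (measurable_const_add u) hRm, ← hcomm,
    ← Measure.map_map hRm (measurable_const_add w)]
  exact h.map hRm

lemma tvDistLE_stdGaussian_map_add {d : ℕ} (u : EuclideanSpace ℝ (Fin d)) :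
    ((stdGaussian (EuclideanSpace ℝ (Fin d))).map (u + ·)).TVDistLE (stdGaussian _) (‖u‖ / 2) := by
  rcases d with _ | n
  · rw [Subsingleton.elim u 0]
    simpa using Measure.TVDistLE.refl _ (le_refl (0 : ℝ))
  refine tvDistLE_stdGaussian_map_add_of_norm_eq (w := EuclideanSpace.single 0 ‖u‖) ?_
    (tvDistLE_stdGaussian_map_single 0 (norm_nonneg u))
  simp

/- Instance search does not see through the anonymous constructor `⟨σ ^ 2, _⟩ : ℝ≥0` used in
`noisyMapGen`, so this product instance has to be provided separately. -/
instance isProbabilityMeasure_pi_gaussianReal_sq {ι : Type*} [Fintype ι] (σ : ℝ) :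
    IsProbabilityMeasure (Measure.pi fun _ : ι => gaussianReal 0 ⟨σ ^ 2, sq_nonneg σ⟩) := by
  have := fun _ : ι => instIsProbabilityMeasureGaussianReal 0 ⟨σ ^ 2, sq_nonneg σ⟩
  infer_instance

lemma pi_gaussianReal_eq_map_stdGaussian {ι : Type*} [Fintype ι] (σ : ℝ) :
    Measure.pi (fun _ : ι => gaussianReal 0 ⟨σ ^ 2, sq_nonneg σ⟩) =
      (stdGaussian (EuclideanSpace ℝ ι)).map (fun x => σ • WithLp.ofLp x) := by
  rw [← map_pi_eq_stdGaussian, Measure.map_map (by fun_prop) (by fun_prop)]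
  change _ = (Measure.pi fun _ => gaussianReal 0 1).map fun y i => σ * y i
  rw [Measure.pi_map_pi fun _ => (measurable_const_mul σ).aemeasurable]
  simp_rw [gaussianReal_map_const_mul, mul_zero, mul_one]
  rfl

lemma tvDistLE_map_add_pi_gaussianReal {d : ℕ} {σ : ℝ} (hσ : 0 < σ) (θ θ' : Fin d → ℝ) :
    ((Measure.pi fun _ : Fin d => gaussianReal 0 ⟨σ ^ 2, sq_nonneg σ⟩).map (θ + ·)).TVDistLE
      ((Measure.pi fun _ : Fin d => gaussianReal 0 ⟨σ ^ 2, sq_nonneg σ⟩).map (θ' + ·))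
      (‖WithLp.toLp 2 (θ - θ')‖ / (2 * σ)) := by
  set γ := stdGaussian (EuclideanSpace ℝ (Fin d))
  set scale := fun x : EuclideanSpace ℝ (Fin d) => σ • WithLp.ofLp x
  have hscale : Measurable scale := by fun_prop
  have hcomm (ϑ : Fin d → ℝ) :
      (ϑ + ·) ∘ scale = scale ∘ (σ⁻¹ • WithLp.toLp 2 ϑ + ·) := by
    ext x i
    simp [scale, mul_add, hσ.ne']
  have hshift (ϑ : Fin d → ℝ) :
      (Measure.pi fun _ : Fin d => gaussianReal 0 ⟨σ ^ 2, sq_nonneg σ⟩).map (ϑ + ·) =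
        ((γ.map (σ⁻¹ • WithLp.toLp 2 (ϑ - θ') + ·)).map (σ⁻¹ • WithLp.toLp 2 θ' + ·)).map scale := by
    rw [pi_gaussianReal_eq_map_stdGaussian, Measure.map_map (measurable_const_add _) hscale,
      hcomm, Measure.map_map (measurable_const_add _) (measurable_const_add _),
      Measure.map_map hscale (by fun_prop)]
    congr 1
    ext x i
    simp [smul_sub]
  rw [hshift θ, hshift θ', sub_self, WithLp.toLp_zero, smul_zero]
  simp only [zero_add, Measure.map_id']
  refine (((tvDistLE_stdGaussian_map_add _).map (by fun_prop)).map hscale).mono (le_of_eq ?_)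
  rw [norm_smul, norm_inv, Real.norm_of_nonneg hσ.le]
  field_simp

end ProbabilityTheory

lemma noisyMapGen_eq_map_prod {E : Type*} [MeasurableSpace E] {d : ℕ}
    (DB : Measure (E × Bool)) [SFinite DB] {ρ : E → (Fin d → ℝ) → E}
    (hρ : Measurable fun q : E × (Fin d → ℝ) => ρ q.1 q.2) (σ : ℝ) (θ : Fin d → ℝ) :
    noisyMapGen DB ρ σ θ =
      (DB.prod ((Measure.pi fun _ : Fin d => gaussianReal 0 ⟨σ ^ 2, sq_nonneg σ⟩).map (θ + ·))).map
        fun q => (ρ q.1.1 q.2, q.1.2) := by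
  rw [noisyMapGen, ← Measure.map_id (μ := DB), Measure.map_prod_map _ _ measurable_id
      (measurable_const_add θ), Measure.map_id,
    Measure.map_map (by fun_prop) (measurable_id.prodMap (measurable_const_add θ))]
  rfl

/-- Lemma 1 (the noisy-response distribution map is (1/(2σ))-Lipschitz in
total variation distance w.r.t. the Euclidean norm of the classifier weights). -/
theorem stmt13 {E : Type*} [MeasurableSpace E] {d : ℕ}
    (DB : Measure (E × Bool)) [IsProbabilityMeasure DB]
    (ρ : E → (Fin d → ℝ) → E)
    (hρ : Measurable fun q : E × (Fin d → ℝ) => ρ q.1 q.2)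
    (σ : ℝ) (hσ : 0 < σ) (θ θ' : Fin d → ℝ)
    (A : Set (E × Bool)) (hA : MeasurableSet A) :
    |(noisyMapGen DB ρ σ θ A).toReal - (noisyMapGen DB ρ σ θ' A).toReal| ≤
      Real.sqrt (∑ i, (θ i - θ' i) ^ 2) / (2 * σ) := by
  have hmeas : Measurable fun q : (E × Bool) × (Fin d → ℝ) => (ρ q.1.1 q.2, q.1.2) := by
    fun_prop
  have hnorm : ‖WithLp.toLp 2 (θ - θ')‖ = Real.sqrt (∑ i, (θ i - θ' i) ^ 2) := by
    simp [EuclideanSpace.norm_eq]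
  rw [noisyMapGen_eq_map_prod DB hρ, noisyMapGen_eq_map_prod DB hρ, ← hnorm]
  exact (((tvDistLE_map_add_pi_gaussianReal hσ θ θ').const_prod DB).map hmeas) A hA
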